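/- The family ℐ = {X ⊆ V : |X ∩ χ⁻¹(i)| ≤ β_i for all i, and |X| + g_X ≤ k} satisfies the matroid exchange property: if A, B ∈ ℐ and |A| < |B|, then there exists e ∈ B \ A such that A ∪ {e} ∈ ℐ. -/

import Mathlib

/-! If some color `j` has `|A_j| < |B_j|` and `|A_j| < α_j`, adding an element of `B \ A` of
color `j` fills one unit of deficit, so `|X| + g_X` does not change. Otherwise every color on
which `B` beats `A` is saturated in `A`, hence `g_A ≤ g_B` and `|A| + g_A < |B| + g_B ≤ k`; adding
any element of `B \ A` of such a color (one exists as `|A| < |B|`) raises `|X| + g_X` by at most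
one. Either way the bound `β` for the new element's color is inherited from `B`. -/

open Finset

variable {V : Type*} [DecidableEq V] [Fintype V]

/-- Number of vertices of color `i` in `X`. -/
def colorCount {c : ℕ} (χ : V → Fin c) (X : Finset V) (i : Fin c) : ℕ :=
  (X.filter (fun v => χ v = i)).card

/-- The family ℐ of independent sets: color upper bounds hold and there is
still room to satisfy all lower bounds within `k` elements
(`α i - colorCount χ X i` is truncated subtraction, i.e. `max 0 (α i - |X ∩ χ⁻¹ i|)`). -/
def FairIndep {c : ℕ} (χ : V → Fin c) (α β : Fin c → ℕ) (k : ℕ) (X : Finset V) : Prop :=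
  (∀ i, colorCount χ X i ≤ β i) ∧
    X.card + ∑ i, (α i - colorCount χ X i) ≤ k

section ColorCount

variable {c : ℕ} (χ : V → Fin c)

omit [DecidableEq V] [Fintype V] in
theorem sum_colorCount (X : Finset V) : ∑ i, colorCount χ X i = X.card :=
  (card_eq_sum_card_fiberwise fun v _ => mem_univ (χ v)).symm

omit [DecidableEq V] [Fintype V] in
theorem colorCount_mono {X Y : Finset V} (h : X ⊆ Y) (i : Fin c) :
    colorCount χ X i ≤ colorCount χ Y i :=
  card_le_card (filter_subset_filter _ h)

omit [Fintype V] in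
theorem colorCount_insert_self {A : Finset V} {e : V} (he : e ∉ A) :
    colorCount χ (insert e A) (χ e) = colorCount χ A (χ e) + 1 := by
  rw [colorCount, filter_insert, if_pos rfl, card_insert_of_notMem fun h => he (mem_filter.1 h).1]
  rfl

omit [Fintype V] in
theorem colorCount_insert_of_ne (A : Finset V) {e : V} {i : Fin c} (hi : χ e ≠ i) :
    colorCount χ (insert e A) i = colorCount χ A i := by
  rw [colorCount, filter_insert, if_neg hi]
  rfl

omit [Fintype V] in
theorem colorCount_insert_le (β : Fin c → ℕ) {A : Finset V} {e : V} (he : e ∉ A)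
    (hA : ∀ i, colorCount χ A i ≤ β i) (hlt : colorCount χ A (χ e) < β (χ e)) (i : Fin c) :
    colorCount χ (insert e A) i ≤ β i := by
  by_cases hi : χ e = i
  · subst hi
    rw [colorCount_insert_self χ he]
    exact hlt
  · rw [colorCount_insert_of_ne χ A hi]
    exact hA i

omit [Fintype V] in
theorem exists_mem_sdiff_of_colorCount_lt {A B : Finset V} {j : Fin c}
    (h : colorCount χ A j < colorCount χ B j) : ∃ e ∈ B \ A, χ e = j := by
  obtain ⟨e, heB, heA⟩ := not_subset.1 fun hsub => (card_le_card hsub).not_gt h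
  obtain ⟨heB', rfl⟩ := mem_filter.1 heB
  exact ⟨e, mem_sdiff.2 ⟨heB', fun heA' => heA (mem_filter.2 ⟨heA', rfl⟩)⟩, rfl⟩

omit [DecidableEq V] [Fintype V] in
theorem exists_colorCount_lt_of_card_lt {A B : Finset V} (h : A.card < B.card) :
    ∃ j, colorCount χ A j < colorCount χ B j := by
  by_contra! hle
  have := sum_le_sum fun i (_ : i ∈ univ) => hle i
  rw [sum_colorCount, sum_colorCount] at this
  omega

variable (α : Fin c → ℕ)

/-- The total lower-bound deficit `g_X`. -/
def deficiency (X : Finset V) : ℕ :=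
  ∑ i, (α i - colorCount χ X i)

omit [DecidableEq V] [Fintype V] in
theorem fairIndep_iff (β : Fin c → ℕ) (k : ℕ) (X : Finset V) :
    FairIndep χ α β k X ↔ (∀ i, colorCount χ X i ≤ β i) ∧ X.card + deficiency χ α X ≤ k :=
  Iff.rfl

omit [DecidableEq V] [Fintype V] in
theorem deficiency_anti {X Y : Finset V} (h : X ⊆ Y) : deficiency χ α Y ≤ deficiency χ α X :=
  sum_le_sum fun i _ => Nat.sub_le_sub_left (colorCount_mono χ h i) _

omit [Fintype V] in
theorem deficiency_insert_add_one {A : Finset V} {e : V} (he : e ∉ A)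
    (hlt : colorCount χ A (χ e) < α (χ e)) :
    deficiency χ α (insert e A) + 1 = deficiency χ α A := by
  have hone : (1 : ℕ) = ∑ i, if χ e = i then 1 else 0 := by simp
  rw [deficiency, deficiency, hone, ← sum_add_distrib]
  refine sum_congr rfl fun i _ => ?_
  by_cases hi : χ e = i
  · subst hi
    rw [colorCount_insert_self χ he, if_pos rfl]
    omega
  · rw [colorCount_insert_of_ne χ A hi, if_neg hi, add_zero]

omit [DecidableEq V] [Fintype V] in
theorem deficiency_le_of_saturated {A B : Finset V}
    (hsat : ∀ i, colorCount χ A i < colorCount χ B i → α i ≤ colorCount χ A i) :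
    deficiency χ α A ≤ deficiency χ α B :=
  sum_le_sum fun i _ => by have := hsat i; omega

end ColorCount

theorem fairIndep_exchange_general {c : ℕ} (χ : V → Fin c) (α β : Fin c → ℕ) (k : ℕ)
    (A B : Finset V)
    (hA : FairIndep χ α β k A) (hB : FairIndep χ α β k B)
    (hcard : A.card < B.card) :
    ∃ e ∈ B \ A, FairIndep χ α β k (insert e A) := by
  simp only [fairIndep_iff] at hA hB ⊢
  have pick : ∀ j, colorCount χ A j < colorCount χ B j →
      ∃ e ∈ B \ A, χ e = j ∧ (∀ i, colorCount χ (insert e A) i ≤ β i) := by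
    intro j hj
    obtain ⟨e, he, rfl⟩ := exists_mem_sdiff_of_colorCount_lt χ hj
    exact ⟨e, he, rfl, colorCount_insert_le χ β (mem_sdiff.1 he).2 hA.1
      (hj.trans_le (hB.1 (χ e)))⟩
  by_cases hdeficit : ∃ j, colorCount χ A j < colorCount χ B j ∧ colorCount χ A j < α j
  · obtain ⟨j, hjB, hjα⟩ := hdeficit
    obtain ⟨e, he, rfl, hβ⟩ := pick j hjB
    have hnew := deficiency_insert_add_one χ α (mem_sdiff.1 he).2 hjα
    refine ⟨e, he, hβ, ?_⟩
    rw [card_insert_of_notMem (mem_sdiff.1 he).2]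
    omega
  · push Not at hdeficit
    obtain ⟨j, hj⟩ := exists_colorCount_lt_of_card_lt χ hcard
    obtain ⟨e, he, -, hβ⟩ := pick j hj
    have hslack := deficiency_le_of_saturated χ α hdeficit
    have hanti := deficiency_anti χ α (subset_insert e A)
    refine ⟨e, he, hβ, ?_⟩
    rw [card_insert_of_notMem (mem_sdiff.1 he).2]
    omega

theorem fairIndep_exchange {c : ℕ} (χ : V → Fin c) (α β : Fin c → ℕ) (k : ℕ)
    (hαβ : ∀ i, α i ≤ β i) (hk : ∑ i, α i ≤ k) (A B : Finset V)
    (hA : FairIndep χ α β k A) (hB : FairIndep χ α β k B)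
    (hcard : A.card < B.card) :
    ∃ e ∈ B \ A, FairIndep χ α β k (insert e A) :=
  fairIndep_exchange_general χ α β k A B hA hB hcard
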